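/- For q = p^l a power of a prime p, the symmetric Pascal matrix P(q) satisfies P(q)^3 ≡ I (mod p), i.e., P(q) has order dividing 3 over 𝔽_p. -/

import Mathlib

/-!
Let `q = p ^ l`, `S i j = (-1) ^ i * C(j, i)` and let `J` be the reversal permutation matrix.
Over any commutative ring `Sᵀ * S = P` (Vandermonde) and `S * S = 1`, since `S` is the matrix of
`f(X) ↦ f(1 - X)` on polynomials of degree `< q`. In characteristic `p` we have
`(1 - X) ^ q = 1 - X ^ q`, so comparing coefficients of `X ^ i` in
`(1 - X) ^ (q - 1 - j) = (1 - X ^ q) / (1 - X) ^ (j + 1)` gives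
`C(i + j, i) = (-1) ^ i * C(q - 1 - j, i)` for `i, j < q`, i.e. `P = S * J`, and by symmetry
`P = J * Sᵀ`. Hence `P ^ 3 = S * J * (J * Sᵀ) * (S * J) = S * P * J = S * S * (J * J) = 1`.
-/

open Finset Matrix PowerSeries

theorem Finset.sum_range_eq_of_forall_ge_eq_zero {M : Type*} [AddCommMonoid M] {f : ℕ → M}
    {m n : ℕ} (hmn : m ≤ n) (hf : ∀ k, m ≤ k → f k = 0) :
    ∑ k ∈ range n, f k = ∑ k ∈ range m, f k :=
  (sum_subset (range_mono hmn) fun k _ hk => hf k (by simpa using hk)).symm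

theorem Nat.sum_range_choose_mul_choose (i j : ℕ) :
    ∑ k ∈ range (i + 1), i.choose k * j.choose k = (i + j).choose i := by
  rw [Nat.add_comm i j, Nat.add_choose_eq, Finset.Nat.sum_antidiagonal_eq_sum_range_succ_mk]
  refine sum_congr rfl fun k hk => ?_
  rw [mul_comm, Nat.choose_symm (Nat.lt_succ_iff.mp (mem_range.mp hk))]

theorem PowerSeries.coeff_one_sub_X_pow {R : Type*} [CommRing R] (m n : ℕ) :
    coeff n ((1 - X : R⟦X⟧) ^ m) = (-1) ^ n * m.choose n := by
  have h : (1 - X : R⟦X⟧) ^ m = rescale (-1) ((1 + Polynomial.X) ^ m : Polynomial R) := by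
    simp [sub_eq_add_neg]
  rw [h, coeff_rescale, Polynomial.coeff_coe, Polynomial.coeff_one_add_X_pow]

theorem sum_range_neg_one_pow_mul_choose_mul_choose {R : Type*} [CommRing R] (i j : ℕ) :
    ∑ k ∈ range (j + 1), (-1) ^ (i + k) * (k.choose i * j.choose k : R) =
      if i = j then 1 else 0 := by
  have h := congrArg (coeff i) (add_pow (-(1 - X) : R⟦X⟧) 1 j)
  rw [show -(1 - X) + 1 = (X : R⟦X⟧) by ring, coeff_X_pow, map_sum] at h
  rw [h]
  refine sum_congr rfl fun k _ => ?_
  symm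
  rw [one_pow, mul_one, neg_pow, mul_comm, ← mul_assoc, ← map_natCast (C (R := R)),
    show (-1 : R⟦X⟧) ^ k = C ((-1) ^ k) by simp, ← map_mul, coeff_C_mul, coeff_one_sub_X_pow]
  ring

theorem CharP.cast_add_choose_eq_neg_one_pow_mul {R : Type*} [CommRing R] (p : ℕ) [Fact p.Prime]
    [CharP R p] {l i j : ℕ} (hi : i < p ^ l) (hj : j < p ^ l) :
    ((i + j).choose i : R) = (-1) ^ i * (p ^ l - (j + 1)).choose i := by
  have : CharP R⟦X⟧ p := charP_of_injective_ringHom C_injective p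
  have hfrob : (1 - X : R⟦X⟧) ^ p ^ l = 1 - X ^ p ^ l := by
    rw [sub_pow_char_pow_of_commute p l (Commute.one_left X), one_pow]
  set invPow := PowerSeries.mk fun n => ((j + n).choose j : R)
  have hseries : (1 - X : R⟦X⟧) ^ (p ^ l - (j + 1)) = (1 - X ^ p ^ l) * invPow :=
    calc (1 - X : R⟦X⟧) ^ (p ^ l - (j + 1))
        = (1 - X) ^ (p ^ l - (j + 1)) * (invPow * (1 - X) ^ (j + 1)) := by
          rw [mk_add_choose_mul_one_sub_pow_eq_one, mul_one]
      _ = (1 - X) ^ (p ^ l - (j + 1) + (j + 1)) * invPow := by ring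
      _ = (1 - X ^ p ^ l) * invPow := by rw [Nat.sub_add_cancel hj, hfrob]
  have h := congrArg (coeff i) hseries
  rw [coeff_one_sub_X_pow, sub_mul, one_mul, map_sub, coeff_mk, coeff_X_pow_mul',
    if_neg (by omega), sub_zero, add_comm j i, ← Nat.choose_symm_add] at h
  exact h.symm

namespace Matrix

variable (R : Type*) (q : ℕ)

def symmPascal [NatCast R] : Matrix (Fin q) (Fin q) R :=
  of fun i j => ((i + j : ℕ).choose i : R)

def signedPascal [Ring R] : Matrix (Fin q) (Fin q) R :=
  of fun i j => (-1) ^ (i : ℕ) * ((j : ℕ).choose i : R)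

variable {R q}

theorem symmPascal_transpose [NatCast R] : (symmPascal R q)ᵀ = symmPascal R q := by
  ext i j
  simp only [transpose_apply, symmPascal, of_apply]
  rw [Nat.choose_symm_add, add_comm]

theorem signedPascal_mul_self [CommRing R] : signedPascal R q * signedPascal R q = 1 := by
  ext i j
  have h := sum_range_neg_one_pow_mul_choose_mul_choose (R := R) i j
  rw [← sum_range_eq_of_forall_ge_eq_zero j.isLt
      fun k hk => by simp [Nat.choose_eq_zero_of_lt hk],
    ← Fin.sum_univ_eq_sum_range
      (fun k => (-1) ^ ((i : ℕ) + k) * ((k.choose i : R) * ((j : ℕ).choose k)))] at h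
  simp only [mul_apply, one_apply, ← Fin.val_inj, ← h, signedPascal, of_apply, pow_add]
  exact sum_congr rfl fun k _ => by ring

theorem transpose_signedPascal_mul_signedPascal [CommRing R] :
    (signedPascal R q)ᵀ * signedPascal R q = symmPascal R q := by
  ext i j
  rw [mul_apply, symmPascal, of_apply, ← Nat.sum_range_choose_mul_choose,
    ← sum_range_eq_of_forall_ge_eq_zero i.isLt fun k hk => by simp [Nat.choose_eq_zero_of_lt hk],
    Nat.cast_sum, ← Fin.sum_univ_eq_sum_range]
  refine sum_congr rfl fun k _ => ?_
  simp only [signedPascal, transpose_apply, of_apply, Nat.cast_mul]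
  rw [mul_mul_mul_comm, ← mul_pow, neg_one_mul, neg_neg, one_pow, one_mul]

theorem symmPascal_eq_signedPascal_mul_permMatrix_revPerm [CommRing R] (p : ℕ) [Fact p.Prime]
    [CharP R p] (l : ℕ) :
    symmPascal R (p ^ l) = signedPascal R (p ^ l) * Fin.revPerm.permMatrix R := by
  rw [Equiv.Perm.permMatrix, PEquiv.mul_toMatrix_toPEquiv, Fin.revPerm_symm]
  ext i j
  simp only [symmPascal, signedPascal, of_apply, submatrix_apply, id, Fin.revPerm_apply,
    Fin.val_rev]
  exact CharP.cast_add_choose_eq_neg_one_pow_mul p i.isLt j.isLt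

end Matrix

/-- For `q = p^l` a prime power, the symmetric Pascal matrix over `𝔽_p`
satisfies `P(q)^3 = 1`. -/
theorem pascal_prime_power_cube_eq_one (p : ℕ) [Fact p.Prime] (l : ℕ) :
    (Matrix.of fun i j : Fin (p ^ l) => ((Nat.choose (i + j) i : ZMod p))) ^ 3 = 1 := by
  change symmPascal (ZMod p) (p ^ l) ^ 3 = 1
  set S := signedPascal (ZMod p) (p ^ l)
  set J : Matrix (Fin (p ^ l)) (Fin (p ^ l)) (ZMod p) := Fin.revPerm.permMatrix (ZMod p)
  have hJJ : J * J = 1 := by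
    rw [← permMatrix_mul, show Fin.revPerm * Fin.revPerm = 1 from Equiv.ext Fin.rev_rev,
      permMatrix_one]
  have hSJ : symmPascal (ZMod p) (p ^ l) = S * J :=
    symmPascal_eq_signedPascal_mul_permMatrix_revPerm p l
  have hJS : symmPascal (ZMod p) (p ^ l) = J * Sᵀ := by
    rw [← symmPascal_transpose, hSJ, transpose_mul, transpose_permMatrix, Equiv.Perm.inv_def,
      Fin.revPerm_symm]
  set P := symmPascal (ZMod p) (p ^ l)
  calc P ^ 3 = (S * J) * (J * Sᵀ) * (S * J) := by rw [← hSJ, ← hJS, pow_three']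
    _ = S * (J * J) * (Sᵀ * S) * J := by simp only [Matrix.mul_assoc]
    _ = S * P * J := by rw [hJJ, transpose_signedPascal_mul_signedPascal, Matrix.mul_one]
    _ = (S * S) * (J * J) := by rw [hSJ]; simp only [Matrix.mul_assoc]
    _ = 1 := by rw [signedPascal_mul_self, hJJ, Matrix.one_mul]
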